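/- arXiv:2302.14810 — 3 statements merged into one kernel-verified Lean document; each statement's English description precedes it below -/
import Mathlib

section
/- Let Q be an orthogonal n×n real matrix (Qᵀ·Q = 1) and Ω a skew-symmetric n×n real matrix. Then Q·⁅Ω, P_0^i⁆·Qᵀ = 0 for all 1 ≤ i ≤ r if and only if Ω is block diagonal, i.e. Ω = Σ_{i=1}^{r} P_0^i · Ω · P_0^i. (This characterizes the vertical space of the main orbital map of the flag manifold at Q.) -/
/-!
Conjugation by an orthogonal matrix is injective, so the condition says that `Ω` commutes with
every `P_0^i`. Since `P_0^i` is diagonal, `(Ω P_0^i - P_0^i Ω)_{jk} = Ω_{jk} ([b k = i] - [b j = i])`,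
which vanishes for all `i` exactly when `Ω_{jk} = 0` whenever `j` and `k` lie in different blocks;
that is also what `Ω = Σᵢ P_0^i Ω P_0^i` says entrywise.
-/

open Matrix

/-- The standard projector `P_0^i` associated to a block-assignment `b : Fin n → Fin r`:
the diagonal matrix whose `(j,j)` entry is `1` if `b j = i` and `0` otherwise. -/
def stdProj {n r : ℕ} (b : Fin n → Fin r) (i : Fin r) : Matrix (Fin n) (Fin n) ℝ :=
  Matrix.diagonal fun j => if b j = i then (1 : ℝ) else 0

namespace Matrix

variable {m R : Type*} [Fintype m] [DecidableEq m]

theorem mul_mul_transpose_eq_zero_iff [Semiring R] {Q A : Matrix m m R} (hQ : Qᵀ * Q = 1) :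
    Q * A * Qᵀ = 0 ↔ A = 0 := by
  refine ⟨fun h => ?_, fun h => by rw [h, Matrix.mul_zero, Matrix.zero_mul]⟩
  calc A = Qᵀ * Q * A * (Qᵀ * Q) := by rw [hQ, Matrix.one_mul, Matrix.mul_one]
    _ = Qᵀ * (Q * A * Qᵀ) * Q := by simp only [Matrix.mul_assoc]
    _ = 0 := by rw [h, Matrix.mul_zero, Matrix.zero_mul]

theorem mul_diagonal_sub_diagonal_mul_apply [CommRing R] (A : Matrix m m R) (d : m → R) (j k : m) :
    (A * diagonal d - diagonal d * A) j k = A j k * (d k - d j) := by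
  rw [sub_apply, mul_diagonal, diagonal_mul]
  ring

end Matrix

section StdProj

variable {n r : ℕ} (b : Fin n → Fin r) (Ω : Matrix (Fin n) (Fin n) ℝ)

theorem sum_stdProj_mul_mul_stdProj_apply (j k : Fin n) :
    (∑ i, stdProj b i * Ω * stdProj b i) j k = if b j = b k then Ω j k else 0 := by
  simp only [Matrix.sum_apply, stdProj, mul_diagonal, diagonal_mul, boole_mul, mul_boole,
    ← ite_and]
  by_cases h : b j = b k
  · simp [h]
  · rw [if_neg h]
    exact Finset.sum_eq_zero fun i _ => if_neg fun ⟨hk, hj⟩ => h (hj.trans hk.symm)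

theorem forall_mul_stdProj_sub_stdProj_mul_eq_zero_iff :
    (∀ i, Ω * stdProj b i - stdProj b i * Ω = 0) ↔ ∀ j k, b j ≠ b k → Ω j k = 0 := by
  simp only [← Matrix.ext_iff, stdProj, mul_diagonal_sub_diagonal_mul_apply, Matrix.zero_apply]
  refine ⟨fun h j k hjk => ?_, fun h i j k => ?_⟩
  · simpa [Ne.symm hjk] using h (b j) j k
  · by_cases hjk : b j = b k
    · simp [hjk]
    · simp [h j k hjk]

theorem eq_sum_stdProj_mul_mul_stdProj_iff :
    Ω = ∑ i, stdProj b i * Ω * stdProj b i ↔ ∀ j k, b j ≠ b k → Ω j k = 0 := by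
  simp only [← Matrix.ext_iff, sum_stdProj_mul_mul_stdProj_apply]
  refine ⟨fun h j k hjk => by simpa [hjk] using h j k, fun h j k => ?_⟩
  split_ifs with hjk
  · rfl
  · exact h j k hjk

end StdProj

theorem vertical_space_characterization_general
    {n r : ℕ} (b : Fin n → Fin r)
    (Q Ω : Matrix (Fin n) (Fin n) ℝ) (hQ : Qᵀ * Q = 1) :
    (∀ i, Q * (Ω * stdProj b i - stdProj b i * Ω) * Qᵀ = 0)
      ↔ Ω = ∑ i, stdProj b i * Ω * stdProj b i := by
  simp only [mul_mul_transpose_eq_zero_iff hQ]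
  rw [forall_mul_stdProj_sub_stdProj_mul_eq_zero_iff, eq_sum_stdProj_mul_mul_stdProj_iff]

/-- Let `Q` be an orthogonal `n × n` real matrix and `Ω` a skew-symmetric `n × n` real matrix.
Then `Q·⁅Ω, P_0^i⁆·Qᵀ = 0` for all `i` iff `Ω` is block diagonal, i.e.
`Ω = Σᵢ P_0^i · Ω · P_0^i`.  (Characterization of the vertical space of the main orbital map
of the flag manifold at `Q`.) -/
theorem vertical_space_characterization
    {n r : ℕ} (hn : 1 ≤ n) (q : Fin r → ℕ) (hq : ∀ i, 0 < q i)
    (b : Fin n → Fin r)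
    (hb : ∀ i, (Finset.univ.filter fun j => b j = i).card = q i)
    (Q Ω : Matrix (Fin n) (Fin n) ℝ) (hQ : Qᵀ * Q = 1) (hΩ : Ωᵀ = -Ω) :
    (∀ i, Q * (Ω * stdProj b i - stdProj b i * Ω) * Qᵀ = 0)
      ↔ Ω = ∑ i, stdProj b i * Ω * stdProj b i :=
  vertical_space_characterization_general b Q Ω hQ
end

section
/- For every flag (P_i)_{1≤i≤r} of type I there exists a special orthogonal n×n real matrix Q (Qᵀ·Q = 1 and det Q = 1) such that Q·P_0^i·Qᵀ = P_i for all 1 ≤ i ≤ r. (Surjectivity of the main orbital map π_0^I : SO(n) → F^I.) -/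
open Matrix

/-!
The ranges of the `P i` are mutually orthogonal subspaces of dimensions `q i`. Choosing an
orthonormal basis of each range and placing its vectors in the columns `j` with `b j = i` gives an
orthogonal matrix `Q` whose columns are eigenvectors of every `P i`, i.e. `P i * Q = Q * P_0^i`;
hence `Q * P_0^i * Qᵀ = P i`. Flipping the sign of one column fixes the determinant without
affecting conjugation of diagonal matrices.
-/

open Module LinearMap

section InnerProductSpace

variable {𝕜 E κ : Type*} [RCLike 𝕜] [NormedAddCommGroup E] [InnerProductSpace 𝕜 E]

theorem orthogonalFamily_range_of_mul_eq_zero {T : κ → Module.End 𝕜 E}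
    (hsymm : ∀ i, (T i).IsSymmetric) (horth : ∀ i j, i ≠ j → T i * T j = 0) :
    OrthogonalFamily 𝕜 (fun i => range (T i)) fun i => (range (T i)).subtypeₗᵢ := by
  rintro i j hij ⟨_, x, rfl⟩ ⟨_, y, rfl⟩
  change inner 𝕜 (T i x) (T j y) = 0
  rw [hsymm i, ← Module.End.mul_apply, horth i j hij, LinearMap.zero_apply, inner_zero_right]

theorem OrthogonalFamily.exists_orthonormal_mem_of_finrank_eq_card {ι : Type*} [Fintype ι]
    [DecidableEq κ] [FiniteDimensional 𝕜 E] {V : κ → Submodule 𝕜 E}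
    (hV : OrthogonalFamily 𝕜 (fun i => V i) fun i => (V i).subtypeₗᵢ) (b : ι → κ)
    (hdim : ∀ i, finrank 𝕜 (V i) = Fintype.card {j // b j = i}) :
    ∃ v : ι → E, Orthonormal 𝕜 v ∧ ∀ j, v j ∈ V (b j) := by
  let B : ∀ i, OrthonormalBasis {j // b j = i} 𝕜 (V i) := fun i =>
    (stdOrthonormalBasis 𝕜 (V i)).reindex
      (Fintype.equivOfCardEq (by rw [Fintype.card_fin, hdim]))
  have hσ := hV.orthonormal_sigma_orthonormal fun i => (B i).orthonormal
  exact ⟨_, hσ.comp _ (Equiv.sigmaFiberEquiv b).symm.injective, fun j => (B (b j) ⟨j, rfl⟩).2⟩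

theorem exists_orthonormal_apply_eq_ite {ι : Type*} [Fintype ι]
    [DecidableEq κ] [FiniteDimensional 𝕜 E] {T : κ → Module.End 𝕜 E}
    (hsymm : ∀ i, (T i).IsSymmetric) (hidem : ∀ i, IsIdempotentElem (T i))
    (horth : ∀ i j, i ≠ j → T i * T j = 0) (b : ι → κ)
    (hdim : ∀ i, finrank 𝕜 (range (T i)) = Fintype.card {j // b j = i}) :
    ∃ v : ι → E, Orthonormal 𝕜 v ∧ ∀ i j, T i (v j) = if b j = i then v j else 0 := by
  obtain ⟨v, hv, hmem⟩ := (orthogonalFamily_range_of_mul_eq_zero hsymm horth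
    ).exists_orthonormal_mem_of_finrank_eq_card b hdim
  refine ⟨v, hv, fun i j => ?_⟩
  obtain ⟨w, hw⟩ := hmem j
  split_ifs with h
  · exact h ▸ (hidem (b j)).mem_range_iff.mp (hmem j)
  · rw [← hw, ← Module.End.mul_apply, horth i (b j) (Ne.symm h), LinearMap.zero_apply]

end InnerProductSpace

section Matrix

variable {R m n : Type*} [Fintype m] [DecidableEq n]

theorem Matrix.mul_eq_mul_diagonal_of_mulVec_col [Fintype n] [CommSemiring R] {A : Matrix m m R}
    {M : Matrix m n R} {d : n → R} (h : ∀ j, A *ᵥ M.col j = d j • M.col j) :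
    A * M = M * diagonal d := by
  ext k j
  rw [mul_diagonal]
  simpa [mul_apply, mulVec, dotProduct, mul_comm] using congrFun (h j) k

theorem Orthonormal.transpose_mul_self_eq_one {v : n → EuclideanSpace ℝ m}
    (hv : Orthonormal ℝ v) : (of fun k j => v j k)ᵀ * of (fun k j => v j k) = 1 := by
  ext j j'
  simpa [mul_apply, one_apply, PiLp.inner_apply, mul_comm] using orthonormal_iff_ite.mp hv j j'

theorem Matrix.exists_det_eq_one_conj_diagonal_eq [Fintype n] [CommRing R] [NoZeroDivisors R]
    {Q : Matrix n n R} (hQ : Qᵀ * Q = 1) :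
    ∃ Q' : Matrix n n R, Q'ᵀ * Q' = 1 ∧ Q'.det = 1 ∧
      ∀ d, Q' * diagonal d * Q'ᵀ = Q * diagonal d * Qᵀ := by
  by_cases hdet : Q.det = 1
  · exact ⟨Q, hQ, hdet, fun _ => rfl⟩
  have hneg : Q.det = -1 := by
    have : Q.det * Q.det = 1 := by simpa [det_transpose] using congrArg det hQ
    exact (mul_self_eq_one_iff.mp this).resolve_left hdet
  obtain ⟨j⟩ : Nonempty n := not_isEmpty_iff.mp fun _ => hdet det_isEmpty
  let S : Matrix n n R := diagonal fun k => if k = j then -1 else 1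
  have hSS : S * S = 1 := by
    rw [diagonal_mul_diagonal, ← diagonal_one]
    congr 1; ext k; split_ifs <;> simp
  have hST : Sᵀ = S := diagonal_transpose _
  have hS : ∀ d, S * diagonal d * S = diagonal d := fun d => by
    rw [(commute_diagonal _ _ : Commute S (diagonal d)).eq, mul_assoc, hSS, mul_one]
  refine ⟨Q * S, ?_, ?_, fun d => ?_⟩
  · rw [transpose_mul, hST, mul_assoc, ← mul_assoc Qᵀ, hQ, one_mul, hSS]
  · rw [det_mul, hneg, det_diagonal, Finset.prod_ite_eq']; simp
  · calc Q * S * diagonal d * (Q * S)ᵀ = Q * (S * diagonal d * S) * Qᵀ := by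
          rw [transpose_mul, hST]; simp only [Matrix.mul_assoc]
      _ = Q * diagonal d * Qᵀ := by rw [hS]

end Matrix

theorem exists_special_orthogonal_generating_flag_general
    {n r : ℕ} (q : Fin r → ℕ)
    (b : Fin n → Fin r)
    (hb : ∀ i, (Finset.univ.filter fun j => b j = i).card = q i)
    (P : Fin r → Matrix (Fin n) (Fin n) ℝ)
    (hsymm : ∀ i, (P i)ᵀ = P i)
    (hidem : ∀ i, P i * P i = P i)
    (horth : ∀ i j, i ≠ j → P i * P j = 0)
    (hrank : ∀ i, (P i).rank = q i) :
    ∃ Q : Matrix (Fin n) (Fin n) ℝ,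
      Qᵀ * Q = 1 ∧ Q.det = 1 ∧ ∀ i, Q * stdProj b i * Qᵀ = P i := by
  obtain ⟨v, hv, hPv⟩ := exists_orthonormal_apply_eq_ite
    (T := fun i => toEuclideanLin (P i))
    (fun i => isSymmetric_toEuclideanLin_iff.mpr (isHermitian_iff_isSymm.mpr (hsymm i)))
    (fun i => by rw [IsIdempotentElem, Module.End.mul_eq_comp, ← toLpLin_mul_same, hidem])
    (fun i j hij => by rw [Module.End.mul_eq_comp, ← toLpLin_mul_same, horth i j hij, map_zero])
    b (fun i => by
      rw [Fintype.card_subtype, hb, ← hrank, rank_eq_finrank_range_toLin _ (PiLp.basisFun 2 ℝ _)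
        (PiLp.basisFun 2 ℝ _), ← toLpLin_eq_toLin])
  let Q : Matrix (Fin n) (Fin n) ℝ := of fun k j => v j k
  have hQ : Qᵀ * Q = 1 := hv.transpose_mul_self_eq_one
  have hPQ : ∀ i, P i * Q = Q * stdProj b i := fun i =>
    mul_eq_mul_diagonal_of_mulVec_col fun j => by
      have hcol : Q.col j = v j := rfl
      simpa [hcol, apply_ite] using congrArg WithLp.ofLp (hPv i j)
  obtain ⟨Q', hQ', hdet, hconj⟩ := exists_det_eq_one_conj_diagonal_eq hQ
  refine ⟨Q', hQ', hdet, fun i => ?_⟩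
  rw [stdProj, hconj, ← stdProj, ← hPQ, Matrix.mul_assoc, mul_eq_one_comm.mp hQ, Matrix.mul_one]

/-- For every flag `(P_i)` of type `I` there exists a special orthogonal `n × n` real matrix
`Q` (`Qᵀ·Q = 1`, `det Q = 1`) such that `Q·P_0^i·Qᵀ = P_i` for all `i`.  (Surjectivity of the
main orbital map `π_0^I : SO(n) → F^I`.) -/
theorem exists_special_orthogonal_generating_flag
    {n r : ℕ} (hn : 1 ≤ n) (q : Fin r → ℕ) (hq : ∀ i, 0 < q i)
    (b : Fin n → Fin r)
    (hb : ∀ i, (Finset.univ.filter fun j => b j = i).card = q i)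
    (P : Fin r → Matrix (Fin n) (Fin n) ℝ)
    (hsymm : ∀ i, (P i)ᵀ = P i)
    (hidem : ∀ i, P i * P i = P i)
    (horth : ∀ i j, i ≠ j → P i * P j = 0)
    (hrank : ∀ i, (P i).rank = q i) :
    ∃ Q : Matrix (Fin n) (Fin n) ℝ,
      Qᵀ * Q = 1 ∧ Q.det = 1 ∧ ∀ i, Q * stdProj b i * Qᵀ = P i :=
  exists_special_orthogonal_generating_flag_general q b hb P hsymm hidem horth hrank
end

section
/- Let Q be an orthogonal n×n real matrix (Qᵀ·Q = 1 = Q·Qᵀ), set P_i := Q·P_0^i·Qᵀ, and let Ω be a skew-symmetric n×n real matrix that is horizontal, i.e. P_0^j·Ω·P_0^j = 0 for all 1 ≤ j ≤ r. Define Δ_i := Q·⁅Ω, P_0^i⁆·Qᵀ for 1 ≤ i ≤ r. Then (1/2) Σ_{i=1}^{r} ⁅Δ_i, P_i⁆ = Q·Ω·Qᵀ; equivalently, ((1/2) Σ_{i=1}^{r} ⁅Δ_i, P_i⁆)·Q = Q·Ω. (This is the algebraic content of the formula Δ^♯_Q = (1/2)(Σ_i ⁅Δ_i, P_i⁆)·Q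 for the horizontal lift of a tangent vector Δ to the flag manifold.) -/
/-!
Since `Qᵀ Q = 1`, the map `x ↦ Q x Qᵀ` is multiplicative, so the statement reduces to
`Σᵢ ⁅⁅Ω, pᵢ⁆, pᵢ⁆ = 2Ω` for the projectors `pᵢ = P_0^i`. For an idempotent `p` with `pΩp = 0`,
expanding gives `⁅⁅Ω, p⁆, p⁆ = Ωp + pΩ`, and summing over idempotents with `Σᵢ pᵢ = 1`
yields `Ω + Ω`.
-/

open Matrix

section Ring

variable {R : Type*} [Ring R]

def sandwichHom (u v : R) (h : v * u = 1) : R →ₙ+* R where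
  toFun x := u * x * v
  map_mul' x y := by
    calc u * (x * y) * v = u * x * (v * u) * y * v := by rw [h, mul_one, mul_assoc u x y]
      _ = u * x * v * (u * y * v) := by simp only [mul_assoc]
  map_zero' := by simp
  map_add' x y := by simp [mul_add, add_mul]

lemma IsIdempotentElem.double_commutator_eq {p ω : R} (hp : IsIdempotentElem p)
    (hω : p * ω * p = 0) :
    (ω * p - p * ω) * p - p * (ω * p - p * ω) = ω * p + p * ω := by
  have hpωp : p * (ω * p) = 0 := by rw [← mul_assoc, hω]
  simp only [sub_mul, mul_sub, mul_assoc, hp.eq, hpωp, ← mul_assoc p p ω]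
  abel

lemma sum_double_commutator_of_sum_eq_one {ι : Type*} [Fintype ι] {p : ι → R}
    (hp : ∀ i, IsIdempotentElem (p i)) (hsum : ∑ i, p i = 1) {ω : R}
    (hω : ∀ i, p i * ω * p i = 0) :
    ∑ i, ((ω * p i - p i * ω) * p i - p i * (ω * p i - p i * ω)) = ω + ω := by
  rw [Finset.sum_congr rfl fun i _ => (hp i).double_commutator_eq (hω i),
    Finset.sum_add_distrib, ← Finset.mul_sum, ← Finset.sum_mul, hsum, mul_one, one_mul]

end Ring

lemma isIdempotentElem_stdProj {n r : ℕ} (b : Fin n → Fin r) (i : Fin r) :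
    IsIdempotentElem (stdProj b i) := by
  rw [IsIdempotentElem, stdProj, diagonal_mul_diagonal]
  congr 1
  ext j
  split_ifs <;> simp

lemma sum_stdProj {n r : ℕ} (b : Fin n → Fin r) : ∑ i, stdProj b i = 1 := by
  ext j k
  simp [stdProj, Matrix.sum_apply, diagonal_apply, one_apply]

theorem horizontal_lift_formula_flag_general
    {n r : ℕ}
    (b : Fin n → Fin r)
    (Q Ω : Matrix (Fin n) (Fin n) ℝ)
    (hQ : Qᵀ * Q = 1)
    (hhor : ∀ j, stdProj b j * Ω * stdProj b j = 0)
    (P Δ : Fin r → Matrix (Fin n) (Fin n) ℝ)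
    (hP : ∀ i, P i = Q * stdProj b i * Qᵀ)
    (hΔ : ∀ i, Δ i = Q * (Ω * stdProj b i - stdProj b i * Ω) * Qᵀ) :
    (1 / 2 : ℝ) • (∑ i, (Δ i * P i - P i * Δ i)) = Q * Ω * Qᵀ ∧
    ((1 / 2 : ℝ) • (∑ i, (Δ i * P i - P i * Δ i))) * Q = Q * Ω := by
  set φ := sandwichHom Q Qᵀ hQ
  have hsum : ∑ i, (Δ i * P i - P i * Δ i) = Q * Ω * Qᵀ + Q * Ω * Qᵀ := by
    have hφ : ∀ i, Δ i * P i - P i * Δ i = φ ((Ω * stdProj b i - stdProj b i * Ω) * stdProj b i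
        - stdProj b i * (Ω * stdProj b i - stdProj b i * Ω)) := by
      intro i
      rw [map_sub, map_mul, map_mul, hΔ, hP]
      rfl
    rw [Finset.sum_congr rfl fun i _ => hφ i, ← map_sum,
      sum_double_commutator_of_sum_eq_one (isIdempotentElem_stdProj b) (sum_stdProj b) hhor, map_add]
    rfl
  have hhalf : (1 / 2 : ℝ) • (∑ i, (Δ i * P i - P i * Δ i)) = Q * Ω * Qᵀ := by
    rw [hsum, ← two_smul ℝ, smul_smul]
    norm_num
  refine ⟨hhalf, ?_⟩
  rw [hhalf, mul_assoc, hQ, mul_one]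

/-- Let `Q` be an orthogonal `n × n` real matrix, `P_i := Q·P_0^i·Qᵀ`, and `Ω` a horizontal
skew-symmetric matrix (`P_0^j·Ω·P_0^j = 0` for all `j`).  With `Δ_i := Q·⁅Ω, P_0^i⁆·Qᵀ`, one
has `(1/2) Σᵢ ⁅Δ_i, P_i⁆ = Q·Ω·Qᵀ`; equivalently `((1/2) Σᵢ ⁅Δ_i, P_i⁆)·Q = Q·Ω`.
(Algebraic content of the horizontal-lift formula `Δ^♯_Q = (1/2)(Σᵢ ⁅Δ_i, P_i⁆)·Q` for the
flag manifold.) -/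
theorem horizontal_lift_formula_flag
    {n r : ℕ} (hn : 1 ≤ n) (q : Fin r → ℕ) (hq : ∀ i, 0 < q i)
    (b : Fin n → Fin r)
    (hb : ∀ i, (Finset.univ.filter fun j => b j = i).card = q i)
    (Q Ω : Matrix (Fin n) (Fin n) ℝ)
    (hQ : Qᵀ * Q = 1) (hQ' : Q * Qᵀ = 1) (hΩ : Ωᵀ = -Ω)
    (hhor : ∀ j, stdProj b j * Ω * stdProj b j = 0)
    (P Δ : Fin r → Matrix (Fin n) (Fin n) ℝ)
    (hP : ∀ i, P i = Q * stdProj b i * Qᵀ)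
    (hΔ : ∀ i, Δ i = Q * (Ω * stdProj b i - stdProj b i * Ω) * Qᵀ) :
    (1 / 2 : ℝ) • (∑ i, (Δ i * P i - P i * Δ i)) = Q * Ω * Qᵀ ∧
    ((1 / 2 : ℝ) • (∑ i, (Δ i * P i - P i * Δ i))) * Q = Q * Ω :=
  horizontal_lift_formula_flag_general b Q Ω hQ hhor P Δ hP hΔ
end
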